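/- arXiv:2504.16029 — 3 statements merged into one kernel-verified Lean document; each statement's English description precedes it below -/
import Mathlib

section
/- For every symmetric traceless real 3×3 matrix Q, one has tr(Q³) ≤ (1/√6)·(tr(Q²))^{3/2}, with equality if and only if Q = s·(n nᵀ − I/3) for some s ≥ 0 and some unit vector n ∈ ℝ³. -/
/-!
Diagonalize `Q`: its eigenvalues `a, b, c` satisfy `a + b + c = 0`, and then
`(a² + b² + c²)³ - 6 (a³ + b³ + c³)² = 2 ((a - b) (b - c) (c - a))²`, which gives the inequality.

In the equality case write `tr(Q²) = 6 t²` with `t ≥ 0`, so that `tr(Q³) = 6 t³`. For a traceless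
`3 × 3` matrix Cayley–Hamilton reads `Q³ = (tr(Q²)/2) Q + (tr(Q³)/3) I`, i.e.
`(Q - 2t)(Q + t)² = 0`. As `Q` is symmetric, `(Q - 2t)(Q + t)` is a symmetric matrix with zero
square, hence zero; so for `t > 0` the matrix `P = (Q + t)/(3t)` is a symmetric idempotent of trace
one, i.e. `n nᵀ` for a unit vector `n`, and `Q = 3t (n nᵀ - I/3)`.
-/

open Matrix

theorem six_mul_sq_sum_cubes_le {R : Type*} [CommRing R] [LinearOrder R] [IsStrictOrderedRing R]
    {a b c : R} (h : a + b + c = 0) :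
    6 * (a ^ 3 + b ^ 3 + c ^ 3) ^ 2 ≤ (a ^ 2 + b ^ 2 + c ^ 2) ^ 3 := by
  have hdisc : (a ^ 2 + b ^ 2 + c ^ 2) ^ 3 - 6 * (a ^ 3 + b ^ 3 + c ^ 3) ^ 2
      = 2 * ((a - b) * (b - c) * (c - a)) ^ 2 := by
    obtain rfl : c = -a - b := by linear_combination h
    ring
  linarith [sq_nonneg ((a - b) * (b - c) * (c - a))]

theorem sq_inv_sqrt_six_mul_rpow_three_halves {p : ℝ} (hp : 0 ≤ p) :
    6 * (1 / √6 * p ^ ((3 : ℝ) / 2)) ^ 2 = p ^ 3 := by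
  rw [mul_pow, div_pow, Real.sq_sqrt (by norm_num), ← Real.rpow_mul_natCast hp]
  norm_num
  ring

theorem le_inv_sqrt_six_mul_rpow {p x : ℝ} (hp : 0 ≤ p) (h : 6 * x ^ 2 ≤ p ^ 3) :
    x ≤ 1 / √6 * p ^ ((3 : ℝ) / 2) := by
  have hy := sq_inv_sqrt_six_mul_rpow_three_halves hp
  exact le_of_abs_le (abs_le_of_sq_le_sq (by linarith) (by positivity))

theorem eq_inv_sqrt_six_mul_rpow_iff {p x : ℝ} (hp : 0 ≤ p) :
    x = 1 / √6 * p ^ ((3 : ℝ) / 2) ↔ 0 ≤ x ∧ 6 * x ^ 2 = p ^ 3 := by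
  have hy := sq_inv_sqrt_six_mul_rpow_three_halves hp
  refine ⟨fun h => h ▸ ⟨by positivity, hy⟩, fun ⟨hx, hx2⟩ => ?_⟩
  exact (sq_eq_sq₀ hx (by positivity)).mp (by linarith)

section Symmetric

variable {m : Type*} [Fintype m]

theorem Matrix.IsHermitian.trace_pow_eq_sum_eigenvalues_pow {𝕜 : Type*} [RCLike 𝕜]
    [DecidableEq m] {A : Matrix m m 𝕜} (hA : A.IsHermitian) (k : ℕ) :
    (A ^ k).trace = ∑ i, (hA.eigenvalues i : 𝕜) ^ k := by
  conv_lhs => rw [hA.spectral_theorem, ← map_pow, Unitary.conjStarAlgAut_apply, trace_mul_cycle,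
    Unitary.coe_star_mul_self, one_mul, diagonal_pow, trace_diagonal]
  simp

theorem Matrix.IsSymm.trace_mul_self_nonneg {A : Matrix m m ℝ} (hA : A.IsSymm) :
    0 ≤ (A * A).trace := by
  simpa [conjTranspose_eq_transpose_of_trivial, hA.eq] using
    (posSemidef_conjTranspose_mul_self A).trace_nonneg

theorem Matrix.IsSymm.eq_zero_of_trace_mul_self_eq_zero {A : Matrix m m ℝ} (hA : A.IsSymm)
    (h : (A * A).trace = 0) : A = 0 :=
  trace_conjTranspose_mul_self_eq_zero_iff.mp <| by
    rwa [conjTranspose_eq_transpose_of_trivial, hA.eq]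

theorem Matrix.IsSymm.eq_zero_of_mul_self_eq_zero {A : Matrix m m ℝ} (hA : A.IsSymm)
    (h : A * A = 0) : A = 0 :=
  hA.eq_zero_of_trace_mul_self_eq_zero (by rw [h, trace_zero])

theorem Matrix.vecMulVec_self_mul_self {R : Type*} [CommSemiring R] {n : m → R}
    (hn : n ⬝ᵥ n = 1) : vecMulVec n n * vecMulVec n n = vecMulVec n n := by
  rw [vecMulVec_mul_vecMulVec, hn, one_smul]

theorem Matrix.IsSymm.exists_eq_vecMulVec_of_mul_self_eq_self [DecidableEq m]
    {P : Matrix m m ℝ} (hP : P.IsSymm) (hPP : P * P = P) (htr : P.trace = 1) :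
    ∃ n : m → ℝ, n ⬝ᵥ n = 1 ∧ P = vecMulVec n n := by
  obtain ⟨i, hi⟩ : ∃ i, P i i ≠ 0 := by
    by_contra! h
    simp [trace, h] at htr
  set v := P *ᵥ Pi.single i 1 with hv
  have hPv : P *ᵥ v = v := by rw [hv, mulVec_mulVec, hPP]
  have hvv : v ⬝ᵥ v = P i i := by
    rw [dotProduct_comm]
    conv_lhs => rw [hv]
    rw [dotProduct_mulVec, ← mulVec_transpose, hP.eq, hPv, dotProduct_single, mul_one, hv,
      mulVec_single_one]
    rfl
  have hpos : 0 < v ⬝ᵥ v := (dotProduct_self_star_nonneg v).lt_of_ne (hvv ▸ hi.symm)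
  set n := (√(v ⬝ᵥ v))⁻¹ • v
  have hnn : n ⬝ᵥ n = 1 := by
    rw [dotProduct_smul, smul_dotProduct, smul_eq_mul, smul_eq_mul, ← mul_assoc, ← sq,
      inv_pow, Real.sq_sqrt hpos.le, inv_mul_cancel₀ hpos.ne']
  have hPn : P *ᵥ n = n := by rw [mulVec_smul, hPv]
  have hnP : n ᵥ* P = n := by rw [← mulVec_transpose, hP.eq, hPn]
  refine ⟨n, hnn, sub_eq_zero.mp ?_⟩
  have hsymm : (P - vecMulVec n n).IsSymm := hP.sub (transpose_vecMulVec n n)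
  refine hsymm.eq_zero_of_trace_mul_self_eq_zero ?_
  have hidem : (P - vecMulVec n n) * (P - vecMulVec n n) = P - vecMulVec n n := by
    rw [sub_mul, mul_sub, mul_sub, hPP, mul_vecMulVec, hPn, vecMulVec_mul, hnP,
      vecMulVec_self_mul_self hnn]
    abel
  rw [hidem, trace_sub, trace_vecMulVec, htr, hnn, sub_self]

theorem Matrix.IsSymm.add_smul_one_mul_self_of_cube_eq [DecidableEq m] {Q : Matrix m m ℝ}
    (hQ : Q.IsSymm) {t : ℝ} (h : Q * Q * Q = (3 * t ^ 2) • Q + (2 * t ^ 3) • 1) :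
    (Q + t • 1) * (Q + t • 1) = (3 * t) • (Q + t • 1) := by
  -- `A = (Q - 2t)(Q + t)`, and the hypothesis says `A (Q + t) = 0`
  set A := Q * Q - t • Q - (2 * t ^ 2) • (1 : Matrix m m ℝ) with hA
  have hAQ : A * Q = (-t) • A := by
    simp only [hA, sub_mul, Matrix.smul_mul, one_mul, h]
    module
  have hAA : A * A = 0 := by
    calc A * A = A * Q * Q - t • (A * Q) - (2 * t ^ 2) • A := by
          simp only [hA, mul_sub, Matrix.mul_smul, mul_one, Matrix.mul_assoc]
      _ = 0 := by simp only [hAQ, Matrix.smul_mul]; module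
  have hAsymm : A.IsSymm := by
    rw [hA, ← sq]
    exact ((hQ.pow 2).sub (hQ.smul t)).sub (isSymm_one.smul _)
  have hQQ : Q * Q = t • Q + (2 * t ^ 2) • 1 := by
    rw [← sub_eq_zero, ← sub_sub]
    exact hAsymm.eq_zero_of_mul_self_eq_zero hAA
  simp only [add_mul, mul_add, Matrix.smul_mul, Matrix.mul_smul, one_mul, mul_one, hQQ]
  module

end Symmetric

theorem Matrix.cayley_hamilton_fin_three_of_trace_eq_zero {K : Type*} [Field K] [CharZero K]
    {Q : Matrix (Fin 3) (Fin 3) K} (hQ : Q.trace = 0) :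
    Q * Q * Q = ((Q * Q).trace / 2) • Q + ((Q * Q * Q).trace / 3) • 1 := by
  rw [trace_fin_three] at hQ
  have h22 : Q 2 2 = -Q 0 0 - Q 1 1 := by linear_combination hQ
  ext i j
  fin_cases i <;> fin_cases j <;>
    simp only [Fin.isValue, Fin.zero_eta, Fin.mk_one, Fin.reduceFinMk, mul_apply,
      Fin.sum_univ_three, trace_fin_three, h22, add_apply, smul_apply, smul_eq_mul, one_apply_eq,
      one_apply_ne, ne_eq, Fin.reduceEq, not_false_eq_true, mul_zero, mul_one, add_zero] <;>
    ring

theorem Matrix.IsSymm.six_mul_sq_trace_cube_le {Q : Matrix (Fin 3) (Fin 3) ℝ} (hQ : Q.IsSymm)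
    (htr : Q.trace = 0) : 6 * (Q * Q * Q).trace ^ 2 ≤ (Q * Q).trace ^ 3 := by
  have hH : Q.IsHermitian := (conjTranspose_eq_transpose_of_trivial Q).trans hQ
  have htrace (k : ℕ) := hH.trace_pow_eq_sum_eigenvalues_pow k
  simp only [Fin.sum_univ_three, RCLike.ofReal_real_eq_id, id] at htrace
  rw [← pow_three', ← sq, htrace 2, htrace 3]
  apply six_mul_sq_sum_cubes_le
  simpa [htr] using (htrace 1).symm

noncomputable def uniaxial (s : ℝ) (n : Fin 3 → ℝ) : Matrix (Fin 3) (Fin 3) ℝ :=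
  s • (vecMulVec n n - (1 / 3 : ℝ) • 1)

theorem uniaxial_mul_self {s : ℝ} {n : Fin 3 → ℝ} (hn : n ⬝ᵥ n = 1) :
    uniaxial s n * uniaxial s n = s ^ 2 • ((1 / 3 : ℝ) • vecMulVec n n + (1 / 9 : ℝ) • 1) := by
  simp only [uniaxial, Matrix.smul_mul, Matrix.mul_smul, sub_mul, mul_sub,
    vecMulVec_self_mul_self hn, one_mul, mul_one]
  module

theorem uniaxial_mul_self_mul_self {s : ℝ} {n : Fin 3 → ℝ} (hn : n ⬝ᵥ n = 1) :
    uniaxial s n * uniaxial s n * uniaxial s n =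
      s ^ 3 • ((1 / 3 : ℝ) • vecMulVec n n - (1 / 27 : ℝ) • 1) := by
  rw [uniaxial_mul_self hn]
  simp only [uniaxial, Matrix.smul_mul, Matrix.mul_smul, add_mul, mul_sub,
    vecMulVec_self_mul_self hn, one_mul, mul_one]
  module

theorem trace_uniaxial_mul_self {s : ℝ} {n : Fin 3 → ℝ} (hn : n ⬝ᵥ n = 1) :
    (uniaxial s n * uniaxial s n).trace = 2 / 3 * s ^ 2 := by
  simp only [uniaxial_mul_self hn, trace_smul, trace_add, trace_vecMulVec, hn, trace_one,
    Fintype.card_fin, Nat.cast_ofNat, smul_eq_mul]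
  ring

theorem trace_uniaxial_mul_self_mul_self {s : ℝ} {n : Fin 3 → ℝ} (hn : n ⬝ᵥ n = 1) :
    (uniaxial s n * uniaxial s n * uniaxial s n).trace = 2 / 9 * s ^ 3 := by
  simp only [uniaxial_mul_self_mul_self hn, trace_smul, trace_sub, trace_vecMulVec, hn, trace_one,
    Fintype.card_fin, Nat.cast_ofNat, smul_eq_mul]
  ring

theorem Matrix.IsSymm.exists_eq_uniaxial_of_cube_eq {Q : Matrix (Fin 3) (Fin 3) ℝ}
    (hQ : Q.IsSymm) (htr : Q.trace = 0) {t : ℝ} (ht : 0 ≤ t)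
    (h : Q * Q * Q = (3 * t ^ 2) • Q + (2 * t ^ 3) • 1) :
    ∃ s n, 0 ≤ s ∧ n ⬝ᵥ n = 1 ∧ Q = uniaxial s n := by
  have hsq := hQ.add_smul_one_mul_self_of_cube_eq h
  rcases ht.eq_or_lt with rfl | ht
  · refine ⟨0, Pi.single 0 1, le_rfl, by simp, ?_⟩
    rw [uniaxial, zero_smul]
    exact hQ.eq_zero_of_mul_self_eq_zero (by simpa using hsq)
  set P := (3 * t)⁻¹ • (Q + t • 1) with hP
  have h3t : 3 * t ≠ 0 := by positivity
  have hPP : P * P = P := by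
    rw [hP, Matrix.smul_mul, Matrix.mul_smul, hsq, smul_smul, smul_smul, mul_assoc,
      inv_mul_cancel₀ h3t, mul_one]
  have hPtr : P.trace = 1 := by
    rw [hP, trace_smul, trace_add, trace_smul, htr, trace_one, Fintype.card_fin, smul_eq_mul,
      smul_eq_mul]
    field_simp
    ring
  obtain ⟨n, hn, hPn⟩ :=
    ((hQ.add (isSymm_one.smul t)).smul _).exists_eq_vecMulVec_of_mul_self_eq_self hPP hPtr
  refine ⟨3 * t, n, by positivity, hn, ?_⟩
  rw [uniaxial, ← hPn, smul_sub, smul_smul, mul_inv_cancel₀ h3t, one_smul, smul_smul]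
  module

theorem Matrix.IsSymm.exists_eq_uniaxial_of_six_mul_sq_trace_cube_eq
    {Q : Matrix (Fin 3) (Fin 3) ℝ} (hQ : Q.IsSymm) (htr : Q.trace = 0)
    (hnonneg : 0 ≤ (Q * Q * Q).trace) (heq : 6 * (Q * Q * Q).trace ^ 2 = (Q * Q).trace ^ 3) :
    ∃ s n, 0 ≤ s ∧ n ⬝ᵥ n = 1 ∧ Q = uniaxial s n := by
  set t := √((Q * Q).trace / 6)
  have ht : 0 ≤ t := Real.sqrt_nonneg _
  have hsq : (Q * Q).trace = 6 * t ^ 2 := by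
    rw [Real.sq_sqrt (div_nonneg hQ.trace_mul_self_nonneg (by norm_num))]
    ring
  have hcube : (Q * Q * Q).trace = 6 * t ^ 3 :=
    (sq_eq_sq₀ hnonneg (by positivity)).mp (by rw [hsq] at heq; linear_combination heq / 6)
  refine hQ.exists_eq_uniaxial_of_cube_eq htr ht
    ((cayley_hamilton_fin_three_of_trace_eq_zero htr).trans ?_)
  rw [hcube, hsq]
  module

/-- For every symmetric traceless real 3×3 matrix `Q`,
`tr(Q³) ≤ (1/√6) (tr(Q²))^{3/2}`, with equality iff `Q = s • (n nᵀ - I/3)` for some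
`s ≥ 0` and some unit vector `n ∈ ℝ³`. -/
theorem stmt2 (Q : Matrix (Fin 3) (Fin 3) ℝ) (hsym : Qᵀ = Q) (htr : Matrix.trace Q = 0) :
    Matrix.trace (Q * Q * Q) ≤ (1 / Real.sqrt 6) * (Matrix.trace (Q * Q)) ^ ((3 : ℝ) / 2) ∧
    (Matrix.trace (Q * Q * Q) = (1 / Real.sqrt 6) * (Matrix.trace (Q * Q)) ^ ((3 : ℝ) / 2) ↔
      ∃ (s : ℝ) (n : Fin 3 → ℝ), 0 ≤ s ∧ n ⬝ᵥ n = 1 ∧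
        Q = s • (Matrix.vecMulVec n n - (1 / 3 : ℝ) • 1)) := by
  have hQ : Q.IsSymm := hsym
  have hp := hQ.trace_mul_self_nonneg
  refine ⟨le_inv_sqrt_six_mul_rpow hp (hQ.six_mul_sq_trace_cube_le htr), ?_⟩
  rw [eq_inv_sqrt_six_mul_rpow_iff hp]
  constructor
  · rintro ⟨hx, heq⟩
    exact hQ.exists_eq_uniaxial_of_six_mul_sq_trace_cube_eq htr hx heq
  · rintro ⟨s, n, hs, hn, rfl⟩
    rw [← uniaxial, trace_uniaxial_mul_self hn, trace_uniaxial_mul_self_mul_self hn]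
    exact ⟨by positivity, by ring⟩
end

section
/- Let B, C > 0 and let A > B²/(24C) (the nematic super-heating temperature). Then the only symmetric traceless real 3×3 matrix Q satisfying A·Q − B·(Q² − (tr(Q²)/3)·I) + C·tr(Q²)·Q = 0 is Q = 0; that is, the isotropic state is the unique critical point of the bulk potential above the super-heating temperature. -/
open Matrix

/-!
Write `r = tr(Q²)`. For `B ≠ 0` the critical-point equation says `Q² = μ Q + (r/3) I` with
`μ = (A + C r)/B`. Taking the trace of the square of this relation gives `tr(Q⁴) = μ² r + r²/3`,
while every traceless `3 × 3` matrix satisfies `2 tr(Q⁴) = r²` (Cayley–Hamilton). Hence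
`r = 6 μ²` unless `r = 0`, i.e. `B² r = 6 (A + C r)²`; but `6 (A + C r)² ≥ 24 A C r > B² r`
for `r > 0` by AM–GM. So `tr(Q²) = 0`, which forces a real symmetric `Q` to vanish.
-/

namespace Matrix

theorem two_mul_trace_mul_self_mul_self_of_trace_eq_zero {R : Type*} [CommRing R]
    {Q : Matrix (Fin 3) (Fin 3) R} (hQ : Q.trace = 0) :
    2 * (Q * Q * (Q * Q)).trace = (Q * Q).trace ^ 2 := by
  have h22 : Q 2 2 = -Q 0 0 - Q 1 1 := by
    simp only [trace, diag, Fin.sum_univ_three] at hQ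
    linear_combination hQ
  simp only [trace, diag, mul_apply, Fin.sum_univ_three, h22]
  ring

theorem trace_mul_self_eq_of_mul_self_eq {K : Type*} [Field K] [CharZero K]
    {Q : Matrix (Fin 3) (Fin 3) K} (hQ : Q.trace = 0) {μ : K}
    (hQQ : Q * Q = μ • Q + ((Q * Q).trace / 3) • 1) (hr : (Q * Q).trace ≠ 0) :
    (Q * Q).trace = 6 * μ ^ 2 := by
  set r := (Q * Q).trace with hr_def
  have htr4 : (Q * Q * (Q * Q)).trace = μ ^ 2 * r + r ^ 2 / 3 := by
    conv_lhs => rw [hQQ]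
    simp only [add_mul, mul_add, smul_mul_assoc, mul_smul_comm, one_mul, mul_one,
      trace_add, trace_smul, trace_one, hQ, ← hr_def, smul_eq_mul,
      Fintype.card_fin]
    push_cast
    ring
  have h := two_mul_trace_mul_self_mul_self_of_trace_eq_zero hQ
  rw [htr4] at h
  apply mul_left_cancel₀ hr
  linear_combination -3 * h

theorem trace_mul_self_eq_zero_iff_of_transpose_eq {m : Type*} [Fintype m]
    {Q : Matrix m m ℝ} (hQ : Qᵀ = Q) : (Q * Q).trace = 0 ↔ Q = 0 := by
  have hQ' : Qᴴ = Q := by rwa [conjTranspose_eq_transpose_of_trivial]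
  simpa only [hQ'] using trace_conjTranspose_mul_self_eq_zero_iff (A := Q)

end Matrix

theorem mul_self_eq_of_landauDeGennes_critical {K : Type*} [Field K] {n : Type*} [Fintype n]
    [DecidableEq n] {A B C : K} (hB : B ≠ 0) {Q : Matrix n n K}
    (h : A • Q - B • (Q * Q - ((Q * Q).trace / 3) • 1) + (C * (Q * Q).trace) • Q = 0) :
    Q * Q = ((A + C * (Q * Q).trace) / B) • Q + ((Q * Q).trace / 3) • 1 := by
  apply smul_right_injective _ hB
  simp only [smul_add, smul_smul, mul_div_cancel₀ _ hB, add_smul]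
  rw [← sub_eq_zero, ← neg_eq_zero, ← h]
  module

theorem sq_mul_lt_six_mul_add_mul_sq {A B C r : ℝ} (hC : 0 < C) (hA : B ^ 2 / (24 * C) < A)
    (hr : 0 < r) : B ^ 2 * r < 6 * (A + C * r) ^ 2 := by
  have hBA : B ^ 2 < 24 * C * A := by
    rwa [div_lt_iff₀ (by positivity), mul_comm] at hA
  nlinarith [sq_nonneg (A - C * r), mul_lt_mul_of_pos_right hBA hr]

/-- For `B, C > 0` and `A > B²/(24C)` (above the nematic super-heating
temperature), the only symmetric traceless real 3×3 matrix `Q` satisfying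
`A Q - B (Q² - (tr(Q²)/3) I) + C tr(Q²) Q = 0` is `Q = 0`. -/
theorem stmt8 (A B C : ℝ) (hB : 0 < B) (hC : 0 < C) (hA : A > B ^ 2 / (24 * C)) :
    ∀ Q : Matrix (Fin 3) (Fin 3) ℝ, Qᵀ = Q → Matrix.trace Q = 0 →
      A • Q - B • (Q * Q - (Matrix.trace (Q * Q) / 3) • 1)
          + (C * Matrix.trace (Q * Q)) • Q = 0 →
      Q = 0 := by
  intro Q hsym htr hcrit
  rw [← trace_mul_self_eq_zero_iff_of_transpose_eq hsym]
  set r := (Q * Q).trace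
  by_contra hr
  have hr6 : r = 6 * ((A + C * r) / B) ^ 2 :=
    trace_mul_self_eq_of_mul_self_eq htr (mul_self_eq_of_landauDeGennes_critical hB.ne' hcrit) hr
  have hrpos : 0 < r := lt_of_le_of_ne (hr6 ▸ by positivity) (Ne.symm hr)
  have hbalance : B ^ 2 * r = 6 * (A + C * r) ^ 2 := by
    conv_lhs => rw [hr6]
    field_simp
  exact (sq_mul_lt_six_mul_add_mul_sq hC hA hrpos).ne hbalance
end

section
/- Fix real numbers ξ ≠ 0, μ₀ > 0, c > 0, and ε₀ > 0. For a symmetric real 3×3 matrix ε with ε₃₃ ≠ 0, define the Berreman matrix M(ε) as the 4×4 real matrix with rows: (−(ε₁₃/ε₃₃)ξ, μ₀c(ε₃₃ − ξ²)/ε₃₃, −(ε₂₃/ε₃₃)ξ, 0); (ε₀c(ε₁₁ − ε₁₃²/ε₃₃), −(ε₁₃/ε₃₃)ξ, ε₀c(ε₁₂ − ε₁₃ε₂₃/ε₃₃), 0); (0, 0, 0, μ₀c); (ε₀c(ε₁₂ − ε₁₃ε₂₃/ε₃₃), −(ε₂₃/ε₃₃)ξ, ε₀c(ε₂₂ − ε₂₃²/ε₃₃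 − ξ²), 0). Then the map ε ↦ M(ε) is injective on the set of symmetric real 3×3 matrices with nonzero (3,3) entry; that is, ε is uniquely determined by its Berreman matrix M. -/
open Matrix

/-!
Entry (1,2) of `M` is `μ₀ c (1 - ξ² / ε₃₃)`, which determines `ε₃₃` because `ξ ≠ 0`. Knowing
`ε₃₃ ≠ 0`, entries (1,1) and (1,3) give `ε₁₃` and `ε₂₃`; then entries (2,1), (2,3) and (4,3)
give `ε₁₁`, `ε₁₂` and `ε₂₂` after cancelling `ε₀ c`. Symmetry supplies the rest of `ε`.
-/

theorem Matrix.IsSymm.ext_of_le {n α : Type*} [LinearOrder n] {A B : Matrix n n α}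
    (hA : A.IsSymm) (hB : B.IsSymm) (h : ∀ i j, i ≤ j → A i j = B i j) : A = B := by
  ext i j
  rcases le_total i j with hij | hji
  · exact h i j hij
  · rw [← hA.apply, ← hB.apply, h j i hji]

theorem eq_of_mul_sub_div_self_eq {K : Type*} [Field K] {k a s t : K} (hk : k ≠ 0)
    (ha : a ≠ 0) (hs : s ≠ 0) (ht : t ≠ 0) (h : k * (s - a) / s = k * (t - a) / t) : s = t := by
  rw [mul_div_assoc, mul_div_assoc, mul_right_inj' hk, sub_div, sub_div, div_self hs,
    div_self ht, sub_right_inj, div_eq_div_iff hs ht, mul_right_inj' ha] at h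
  exact h.symm

/-- For fixed `ξ ≠ 0`, `μ₀ > 0`, `c > 0`, `ε₀ > 0`, the map sending a
symmetric real 3×3 dielectric tensor `ε` (with `ε₃₃ ≠ 0`) to its 4×4 Berreman matrix
`M(ε)` is injective on the set of symmetric real 3×3 matrices with nonzero (3,3) entry;
that is, `ε` is uniquely determined by `M`. -/
theorem stmt14 (ξ μ₀ c ε₀ : ℝ) (hξ : ξ ≠ 0) (hμ₀ : 0 < μ₀) (hc : 0 < c) (hε₀ : 0 < ε₀)
    (M : Matrix (Fin 3) (Fin 3) ℝ → Matrix (Fin 4) (Fin 4) ℝ)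
    (hM : ∀ ε : Matrix (Fin 3) (Fin 3) ℝ, M ε =
      !![-(ε 0 2 / ε 2 2) * ξ, μ₀ * c * (ε 2 2 - ξ ^ 2) / ε 2 2, -(ε 1 2 / ε 2 2) * ξ, 0;
         ε₀ * c * (ε 0 0 - ε 0 2 ^ 2 / ε 2 2), -(ε 0 2 / ε 2 2) * ξ,
           ε₀ * c * (ε 0 1 - ε 0 2 * ε 1 2 / ε 2 2), 0;
         0, 0, 0, μ₀ * c;
         ε₀ * c * (ε 0 1 - ε 0 2 * ε 1 2 / ε 2 2), -(ε 1 2 / ε 2 2) * ξ,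
           ε₀ * c * (ε 1 1 - ε 1 2 ^ 2 / ε 2 2 - ξ ^ 2), 0]) :
    Set.InjOn M {ε : Matrix (Fin 3) (Fin 3) ℝ | εᵀ = ε ∧ ε 2 2 ≠ 0} := by
  rintro ε ⟨hεs, hε⟩ η ⟨hηs, hη⟩ h
  have entry (i j : Fin 4) : M ε i j = M η i j := congrFun₂ h i j
  have e22 : ε 2 2 = η 2 2 :=
    eq_of_mul_sub_div_self_eq (k := μ₀ * c) (by positivity) (pow_ne_zero 2 hξ) hε hη
      (by simpa [hM] using entry 0 1)
  have e02 : ε 0 2 = η 0 2 := by simpa [hM, e22, hξ, hη] using entry 0 0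
  have e12 : ε 1 2 = η 1 2 := by simpa [hM, e22, hξ, hη] using entry 0 2
  have e00 : ε 0 0 = η 0 0 := by simpa [hM, e22, e02, hε₀.ne', hc.ne'] using entry 1 0
  have e01 : ε 0 1 = η 0 1 := by simpa [hM, e22, e02, e12, hε₀.ne', hc.ne'] using entry 1 2
  have e11 : ε 1 1 = η 1 1 := by simpa [hM, e22, e12, hε₀.ne', hc.ne'] using entry 3 2
  refine IsSymm.ext_of_le hεs hηs fun i j hij => ?_
  fin_cases i <;> fin_cases j <;> first | assumption | exact absurd hij (by decide)
end
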